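/- arXiv:2510.17578 — 2 statements merged into one kernel-verified Lean document; each statement's English description precedes it below -/
import Mathlib

section
/- Assume: (i) ‖∇L(Θ*)‖_{∞,∞} ≤ λ/2; (ii) |S_j| ≤ s for every 1 ≤ j ≤ d; (iii) there is ν > 0 such that for every j and every u ∈ ℝ^m with ∑_{i ∉ S_j}|u_i| ≤ 3 ∑_{i ∈ S_j}|u_i|, one has uᵀ ((1/T) Xᵀ X) u ≥ ν ‖u‖₂². Then every global minimizer Θ̂ of Θ ↦ L(Θ) + λ‖Θ‖_{1,1} over ℝ^{m×d} satisfies ‖Θ̂_{·,j} − Θ*_{·,j}‖₂ ≤ 6 √s λ / ν for every 1 ≤ j ≤ d, and consequently ‖Θ̂ − Θ*‖_F ≤ 6 √(s d) λ / ν. -/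
open Matrix Finset

/-!
The objective is a sum of one Lasso problem per column, so each column `θ̂ = Θ̂_{·,j}` of a
minimizer beats `θ* = Θ*_{·,j}` in its own problem. Expanding the quadratic loss around `θ*`,
the cross term is the gradient at `θ*`, which is at most `λ/2` entrywise, and since `θ*` is
supported on `S = S_j` the ℓ¹-penalty decreases by at most `‖u_S‖₁ - ‖u_{Sᶜ}‖₁`,
`u = θ̂ - θ*`. This gives the basic inequality
`(1/2T)‖Xu‖² ≤ (λ/2)(3‖u_S‖₁ - ‖u_{Sᶜ}‖₁)`, so `u` lies in the cone of the restricted eigenvalue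
condition and `ν‖u‖₂² ≤ 3λ‖u_S‖₁ ≤ 3λ√s‖u‖₂`. Each column error is thus at most `3√s λ/ν`, and
summing the squares over the `d` columns bounds the Frobenius error.
-/

theorem apply_le_of_forall_sum_le {ι α : Type*} [Fintype ι] [DecidableEq ι] {f : ι → α → ℝ}
    {x : ι → α} (hx : ∀ y : ι → α, ∑ i, f i (x i) ≤ ∑ i, f i (y i)) (i : ι) (a : α) :
    f i (x i) ≤ f i a := by
  have h := hx (Function.update x i a)
  simp only [Function.apply_update f x i a] at h
  rw [sum_update_of_mem (mem_univ i), sum_eq_add_sum_sdiff_singleton_of_mem (mem_univ i)] at h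
  linarith

theorem Real.sqrt_sum_le_sqrt_card_mul {κ : Type*} (s : Finset κ) {f : κ → ℝ} {C : ℝ}
    (hC : 0 ≤ C) (hf : ∀ j ∈ s, √(f j) ≤ C) : √(∑ j ∈ s, f j) ≤ √(#s) * C := by
  have hsq : ∑ j ∈ s, f j ≤ #s * C ^ 2 := by
    simpa using sum_le_sum fun j hj => (Real.sqrt_le_left hC).mp (hf j hj)
  calc √(∑ j ∈ s, f j) ≤ √(#s * C ^ 2) := Real.sqrt_le_sqrt hsq
    _ = √(#s) * C := by rw [Real.sqrt_mul (Nat.cast_nonneg _), Real.sqrt_sq hC]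

theorem sum_abs_le_sqrt_card_mul_sqrt_sum_sq {ι : Type*} [Fintype ι] (S : Finset ι)
    (u : ι → ℝ) : ∑ i ∈ S, |u i| ≤ √(#S) * √(∑ i, u i ^ 2) := by
  calc ∑ i ∈ S, |u i| = ∑ i ∈ S, 1 * |u i| := by simp
    _ ≤ √(∑ i ∈ S, 1 ^ 2) * √(∑ i ∈ S, |u i| ^ 2) := Real.sum_mul_le_sqrt_mul_sqrt _ _ _
    _ ≤ √(#S) * √(∑ i, u i ^ 2) := by
      simp only [one_pow, sum_const, nsmul_eq_mul, mul_one, sq_abs]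
      gcongr
      exact subset_univ S

theorem abs_dotProduct_le_mul_sum_abs {ι : Type*} [Fintype ι] {g : ι → ℝ} {a : ℝ}
    (hg : ∀ i, |g i| ≤ a) (u : ι → ℝ) : |g ⬝ᵥ u| ≤ a * ∑ i, |u i| := by
  calc |g ⬝ᵥ u| ≤ ∑ i, |g i * u i| := abs_sum_le_sum_abs (fun i => g i * u i) univ
    _ ≤ ∑ i, a * |u i| := sum_le_sum fun i _ => by
      rw [abs_mul]; exact mul_le_mul_of_nonneg_right (hg i) (abs_nonneg _)
    _ = a * ∑ i, |u i| := (mul_sum _ _ _).symm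

theorem sum_abs_sub_sum_abs_le_of_support_subset {ι : Type*} [Fintype ι] [DecidableEq ι]
    {S : Finset ι} {θ : ι → ℝ} (hθ : ∀ i ∉ S, θ i = 0) (θ' : ι → ℝ) :
    ∑ i, |θ i| - ∑ i, |θ' i| ≤ ∑ i ∈ S, |θ' i - θ i| - ∑ i ∈ Sᶜ, |θ' i - θ i| := by
  have hS : ∑ i ∈ S, (|θ i| - |θ' i|) ≤ ∑ i ∈ S, |θ' i - θ i| :=
    sum_le_sum fun i _ => (abs_sub_abs_le_abs_sub _ _).trans_eq (abs_sub_comm _ _)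
  have hSc : ∑ i ∈ Sᶜ, (|θ i| - |θ' i|) = -∑ i ∈ Sᶜ, |θ' i - θ i| := by
    rw [← sum_neg_distrib]
    refine sum_congr rfl fun i hi => ?_
    simp [hθ i (mem_compl.mp hi)]
  rw [← sum_sub_distrib, ← sum_add_sum_compl S]
  linarith

theorem le_div_of_mul_sq_le_mul {ν K r : ℝ} (hν : 0 < ν) (hK : 0 ≤ K) (hr : 0 ≤ r)
    (h : ν * r ^ 2 ≤ K * r) : r ≤ K / ν := by
  rw [le_div_iff₀ hν]
  rcases hr.eq_or_lt with rfl | hr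
  · simpa using hK
  · nlinarith

section Lasso

variable {ι τ : Type*} [Fintype ι] [Fintype τ]

noncomputable def lassoObjective (c lam : ℝ) (X : Matrix τ ι ℝ) (y : τ → ℝ) (θ : ι → ℝ) : ℝ :=
  c / 2 * ∑ t, (y t - (X *ᵥ θ) t) ^ 2 + lam * ∑ i, |θ i|

theorem sum_sq_sub_mulVec_add (X : Matrix τ ι ℝ) (y : τ → ℝ) (θ u : ι → ℝ) :
    ∑ t, (y t - (X *ᵥ (θ + u)) t) ^ 2 =
      ∑ t, (y t - (X *ᵥ θ) t) ^ 2 + 2 * ((Xᵀ *ᵥ (X *ᵥ θ - y)) ⬝ᵥ u) + ∑ t, (X *ᵥ u) t ^ 2 := by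
  rw [mulVec_transpose, ← dotProduct_mulVec, mulVec_add]
  simp only [dotProduct, Pi.add_apply, Pi.sub_apply, mul_sum, ← sum_add_distrib]
  exact sum_congr rfl fun t _ => by ring

theorem dotProduct_smul_gram_mulVec (c : ℝ) (X : Matrix τ ι ℝ) (u : ι → ℝ) :
    u ⬝ᵥ (c • (Xᵀ * X)) *ᵥ u = c * ∑ t, (X *ᵥ u) t ^ 2 := by
  rw [smul_mulVec, dotProduct_smul, ← mulVec_mulVec, dotProduct_mulVec, vecMul_transpose,
    smul_eq_mul]
  simp only [dotProduct, sq]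

variable [DecidableEq ι] {c lam : ℝ} {X : Matrix τ ι ℝ} {y : τ → ℝ} {S : Finset ι}
  {θstar θhat : ι → ℝ}

theorem lasso_basic_inequality (hlam : 0 ≤ lam) (hsupp : ∀ i ∉ S, θstar i = 0)
    (hgrad : ∀ i, |(c • (Xᵀ *ᵥ (X *ᵥ θstar - y))) i| ≤ lam / 2)
    (hmin : lassoObjective c lam X y θhat ≤ lassoObjective c lam X y θstar) :
    c / 2 * ∑ t, (X *ᵥ (θhat - θstar)) t ^ 2 ≤
      lam / 2 * (3 * ∑ i ∈ S, |θhat i - θstar i| - ∑ i ∈ Sᶜ, |θhat i - θstar i|) := by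
  have hexpand := sum_sq_sub_mulVec_add X y θstar (θhat - θstar)
  rw [add_sub_cancel] at hexpand
  have hcross := neg_abs_le (c * ((Xᵀ *ᵥ (X *ᵥ θstar - y)) ⬝ᵥ (θhat - θstar)))
  have hgradu := abs_dotProduct_le_mul_sum_abs hgrad (θhat - θstar)
  rw [smul_dotProduct, smul_eq_mul, ← sum_add_sum_compl S] at hgradu
  have hpenalty := mul_le_mul_of_nonneg_left
    (sum_abs_sub_sum_abs_le_of_support_subset hsupp θhat) hlam
  unfold lassoObjective at hmin
  rw [hexpand] at hmin
  simp only [Pi.sub_apply] at hgradu hcross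
  linarith

theorem lasso_error_mem_cone (hc : 0 ≤ c) (hlam : 0 < lam) (hsupp : ∀ i ∉ S, θstar i = 0)
    (hgrad : ∀ i, |(c • (Xᵀ *ᵥ (X *ᵥ θstar - y))) i| ≤ lam / 2)
    (hmin : lassoObjective c lam X y θhat ≤ lassoObjective c lam X y θstar) :
    ∑ i ∈ Sᶜ, |θhat i - θstar i| ≤ 3 * ∑ i ∈ S, |θhat i - θstar i| := by
  have hbasic := lasso_basic_inequality hlam.le hsupp hgrad hmin
  have hquad : 0 ≤ c / 2 * ∑ t, (X *ᵥ (θhat - θstar)) t ^ 2 := by positivity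
  nlinarith

theorem lasso_error_le {ν : ℝ} (hc : 0 ≤ c) (hlam : 0 < lam) (hν : 0 < ν)
    (hsupp : ∀ i ∉ S, θstar i = 0)
    (hgrad : ∀ i, |(c • (Xᵀ *ᵥ (X *ᵥ θstar - y))) i| ≤ lam / 2)
    (hre : ∀ u : ι → ℝ, ∑ i ∈ Sᶜ, |u i| ≤ 3 * ∑ i ∈ S, |u i| →
      ν * ∑ i, u i ^ 2 ≤ u ⬝ᵥ (c • (Xᵀ * X)) *ᵥ u)
    (hmin : lassoObjective c lam X y θhat ≤ lassoObjective c lam X y θstar) :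
    √(∑ i, (θhat i - θstar i) ^ 2) ≤ 3 * √(#S) * lam / ν := by
  have hbasic := lasso_basic_inequality hlam.le hsupp hgrad hmin
  have hre_u : ν * ∑ i, (θhat i - θstar i) ^ 2 ≤ c * ∑ t, (X *ᵥ (θhat - θstar)) t ^ 2 := by
    have := hre _ (lasso_error_mem_cone hc hlam hsupp hgrad hmin)
    rwa [dotProduct_smul_gram_mulVec] at this
  have hSc : 0 ≤ ∑ i ∈ Sᶜ, |θhat i - θstar i| := by positivity
  have hcs := sum_abs_le_sqrt_card_mul_sqrt_sum_sq S (θhat - θstar)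
  simp only [Pi.sub_apply] at hcs
  have hr := Real.sq_sqrt (by positivity : 0 ≤ ∑ i, (θhat i - θstar i) ^ 2)
  refine le_div_of_mul_sq_le_mul hν (by positivity) (Real.sqrt_nonneg _) ?_
  nlinarith

end Lasso

section Columns

variable {ι κ τ : Type*} [Fintype ι] [Fintype τ]

theorem sum_sq_add_sum_abs_eq_sum_lassoObjective [Fintype κ] (T lam : ℝ) (X : Matrix τ ι ℝ)
    (Y : Matrix τ κ ℝ) (Θ : Matrix ι κ ℝ) :
    1 / (2 * T) * (∑ t, ∑ j, (Y t j - (X * Θ) t j) ^ 2) + lam * ∑ i, ∑ j, |Θ i j| =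
      ∑ j, lassoObjective (1 / T) lam X (Yᵀ j) (Θᵀ j) := by
  rw [show 1 / (2 * T) = 1 / T / 2 by ring, sum_comm (f := fun t j => (Y t j - (X * Θ) t j) ^ 2),
    sum_comm (f := fun i j => |Θ i j|)]
  simp only [lassoObjective, sum_add_distrib, ← mul_sum]
  rfl

theorem smul_transpose_mul_mul_sub_apply (c : ℝ) (X : Matrix τ ι ℝ) (Θ : Matrix ι κ ℝ) (Y : Matrix τ κ ℝ)
    (i : ι) (j : κ) :
    (c • (Xᵀ * (X * Θ - Y))) i j = (c • (Xᵀ *ᵥ (X *ᵥ Θᵀ j - Yᵀ j))) i :=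
  rfl

end Columns

theorem regularized_lse_upper_bound_general (T m d s : ℕ)
    (Y : Matrix (Fin T) (Fin d) ℝ) (X : Matrix (Fin T) (Fin m) ℝ)
    (lam : ℝ) (hlam : 0 < lam) (ν : ℝ) (hν : 0 < ν)
    (Θstar Θhat : Matrix (Fin m) (Fin d) ℝ)
    (hgrad : ∀ (i : Fin m) (j : Fin d),
      |((1 / (T : ℝ)) • (Xᵀ * (X * Θstar - Y))) i j| ≤ lam / 2)
    (hsupp : ∀ j : Fin d,
      (Finset.univ.filter (fun i : Fin m => Θstar i j ≠ 0)).card ≤ s)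
    (hre : ∀ (j : Fin d) (u : Fin m → ℝ),
      (∑ i ∈ Finset.univ.filter (fun i : Fin m => Θstar i j = 0), |u i|
          ≤ 3 * ∑ i ∈ Finset.univ.filter (fun i : Fin m => Θstar i j ≠ 0), |u i|) →
      ν * ∑ i, u i ^ 2 ≤ u ⬝ᵥ ((1 / (T : ℝ)) • (Xᵀ * X)).mulVec u)
    (hmin : ∀ Θ : Matrix (Fin m) (Fin d) ℝ,
      (1 / (2 * (T : ℝ))) * (∑ t, ∑ j, (Y t j - (X * Θhat) t j) ^ 2)
          + lam * ∑ i, ∑ j, |Θhat i j|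
        ≤ (1 / (2 * (T : ℝ))) * (∑ t, ∑ j, (Y t j - (X * Θ) t j) ^ 2)
          + lam * ∑ i, ∑ j, |Θ i j|) :
    (∀ j : Fin d,
      Real.sqrt (∑ i, (Θhat i j - Θstar i j) ^ 2) ≤ 6 * Real.sqrt s * lam / ν) ∧
    Real.sqrt (∑ i, ∑ j, (Θhat i j - Θstar i j) ^ 2)
      ≤ 6 * Real.sqrt ((s : ℝ) * d) * lam / ν := by
  have hmin_cols : ∀ Θ : Matrix (Fin d) (Fin m) ℝ,
      ∑ j, lassoObjective (1 / (T : ℝ)) lam X (Yᵀ j) (Θhatᵀ j) ≤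
        ∑ j, lassoObjective (1 / (T : ℝ)) lam X (Yᵀ j) (Θ j) := fun Θ => by
    simpa only [sum_sq_add_sum_abs_eq_sum_lassoObjective, transpose_transpose] using hmin Θᵀ
  have hcol : ∀ j, √(∑ i, (Θhat i j - Θstar i j) ^ 2) ≤ 3 * √s * lam / ν := by
    intro j
    have hmin_j := apply_le_of_forall_sum_le hmin_cols j (Θstarᵀ j)
    refine (lasso_error_le (S := univ.filter fun i => Θstar i j ≠ 0) (by positivity) hlam hν
      (by simp) (fun i => (smul_transpose_mul_mul_sub_apply _ X Θstar Y i j) ▸ hgrad i j)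
      (by simpa only [compl_filter, not_not] using hre j) hmin_j).trans ?_
    gcongr
    exact hsupp j
  refine ⟨fun j => (hcol j).trans (by gcongr; norm_num), ?_⟩
  calc √(∑ i, ∑ j, (Θhat i j - Θstar i j) ^ 2)
      = √(∑ j, ∑ i, (Θhat i j - Θstar i j) ^ 2) := by rw [sum_comm]
    _ ≤ √(#(univ : Finset (Fin d))) * (3 * √s * lam / ν) :=
      Real.sqrt_sum_le_sqrt_card_mul _ (by positivity) fun j _ => hcol j
    _ = 3 * √(s * d) * lam / ν := by
      rw [card_univ, Fintype.card_fin, Real.sqrt_mul (Nat.cast_nonneg s)]; ring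
    _ ≤ 6 * √(s * d) * lam / ν := by gcongr; norm_num

/-- Deterministic error bounds for the regularized LSE: under the gradient bound,
support-size bound `s`, and a restricted eigenvalue condition with constant `ν > 0`,
every global minimizer `Θ̂` of `Θ ↦ L(Θ) + λ‖Θ‖_{1,1}` satisfies
`‖Θ̂_{·,j} − Θ*_{·,j}‖₂ ≤ 6√s λ/ν` for every column `j`, and
`‖Θ̂ − Θ*‖_F ≤ 6√(sd) λ/ν`. -/
theorem regularized_lse_upper_bound (T m d s : ℕ) (hT : 0 < T) (hm : 0 < m) (hd : 0 < d)
    (hs : 0 < s)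
    (Y : Matrix (Fin T) (Fin d) ℝ) (X : Matrix (Fin T) (Fin m) ℝ)
    (lam : ℝ) (hlam : 0 < lam) (ν : ℝ) (hν : 0 < ν)
    (Θstar Θhat : Matrix (Fin m) (Fin d) ℝ)
    (hgrad : ∀ (i : Fin m) (j : Fin d),
      |((1 / (T : ℝ)) • (Xᵀ * (X * Θstar - Y))) i j| ≤ lam / 2)
    (hsupp : ∀ j : Fin d,
      (Finset.univ.filter (fun i : Fin m => Θstar i j ≠ 0)).card ≤ s)
    (hre : ∀ (j : Fin d) (u : Fin m → ℝ),
      (∑ i ∈ Finset.univ.filter (fun i : Fin m => Θstar i j = 0), |u i|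
          ≤ 3 * ∑ i ∈ Finset.univ.filter (fun i : Fin m => Θstar i j ≠ 0), |u i|) →
      ν * ∑ i, u i ^ 2 ≤ u ⬝ᵥ ((1 / (T : ℝ)) • (Xᵀ * X)).mulVec u)
    (hmin : ∀ Θ : Matrix (Fin m) (Fin d) ℝ,
      (1 / (2 * (T : ℝ))) * (∑ t, ∑ j, (Y t j - (X * Θhat) t j) ^ 2)
          + lam * ∑ i, ∑ j, |Θhat i j|
        ≤ (1 / (2 * (T : ℝ))) * (∑ t, ∑ j, (Y t j - (X * Θ) t j) ^ 2)
          + lam * ∑ i, ∑ j, |Θ i j|) :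
    (∀ j : Fin d,
      Real.sqrt (∑ i, (Θhat i j - Θstar i j) ^ 2) ≤ 6 * Real.sqrt s * lam / ν) ∧
    Real.sqrt (∑ i, ∑ j, (Θhat i j - Θstar i j) ^ 2)
      ≤ 6 * Real.sqrt ((s : ℝ) * d) * lam / ν :=
  regularized_lse_upper_bound_general T m d s Y X lam hlam ν hν Θstar Θhat hgrad hsupp hre hmin
end

section
/- Let r₁, r₂, r₃, r₄ : Ω → ℝ be random variables with E|r_i|^{4+4ε} ≤ M₄ for each i, and let τ > 0. Then | E[ ψ_τ(r₁) ψ_τ(r₂) · ( r₃ r₄ − ψ_τ(r₃) ψ_τ(r₄) ) ] | ≤ 2 M₄ / τ^{4ε}, where the expectation on the left is well defined since the integrand is integrable by Hölder's inequality. -/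
open MeasureTheory

/-- The truncation operator `ψ_τ(x) = sign(x) · min(|x|, τ)`. -/
noncomputable def trunc (τ x : ℝ) : ℝ := Real.sign x * min |x| τ

lemma trunc_eq {τ : ℝ} (hτ : 0 ≤ τ) (x : ℝ) : trunc τ x = max (-τ) (min τ x) := by
  unfold trunc
  rcases lt_trichotomy x 0 with h | h | h
  · rw [Real.sign_of_neg h, abs_of_neg h, min_eq_right (le_trans (le_of_lt h) hτ)]
    rcases le_total (-x) τ with h' | h'
    · rw [min_eq_left h', max_eq_right (by linarith)]; ring
    · rw [min_eq_right h', max_eq_left (by linarith)]; ring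
  · simp [h, min_eq_right hτ, max_eq_right (neg_nonpos.mpr hτ)]
  · rw [Real.sign_of_pos h, abs_of_pos h, one_mul, min_comm,
      max_eq_right (le_min (by linarith) (by linarith))]

lemma abs_trunc_le_min {τ : ℝ} (hτ : 0 ≤ τ) (x : ℝ) : |trunc τ x| ≤ min |x| τ := by
  unfold trunc
  rw [abs_mul, abs_of_nonneg (le_min (abs_nonneg x) hτ)]
  have h1 : |Real.sign x| ≤ 1 := by
    rcases lt_trichotomy x 0 with h | h | h <;>
      simp [Real.sign_of_neg, Real.sign_of_pos, *]
  nlinarith [le_min (abs_nonneg x) hτ]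

lemma trunc_abs_le_tau {τ : ℝ} (hτ : 0 ≤ τ) (x : ℝ) : |trunc τ x| ≤ τ :=
  (abs_trunc_le_min hτ x).trans (min_le_right _ _)

lemma trunc_abs_le {τ : ℝ} (hτ : 0 ≤ τ) (x : ℝ) : |trunc τ x| ≤ |x| :=
  (abs_trunc_le_min hτ x).trans (min_le_left _ _)

lemma trunc_of_abs_le {τ x : ℝ} (hτ : 0 ≤ τ) (h : |x| ≤ τ) : trunc τ x = x := by
  rw [trunc_eq hτ]; cases abs_cases x <;>
  · rw [min_eq_right (by linarith), max_eq_right (by linarith)]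

lemma sub_trunc_abs_le {τ : ℝ} (hτ : 0 ≤ τ) (x : ℝ) : |x - trunc τ x| ≤ |x| := by
  rw [trunc_eq hτ]
  rcases le_total x 0 with h | h
  · rw [min_eq_right (by linarith)]
    rcases le_total (-τ) x with h' | h'
    · rw [max_eq_right h']; simp
    · rw [max_eq_left h', abs_of_nonpos h, abs_of_nonpos (by linarith)]; linarith
  · rcases le_total τ x with h' | h'
    · rw [min_eq_left h', max_eq_right (by linarith),
        abs_of_nonneg h, abs_of_nonneg (by linarith)]; linarith
    · rw [min_eq_right h', max_eq_right (by linarith)]; simp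

lemma trunc_measurable {τ : ℝ} (hτ : 0 ≤ τ) : Measurable (trunc τ) := by
  have : trunc τ = fun x => max (-τ) (min τ x) := funext (trunc_eq hτ)
  rw [this]
  exact measurable_const.max (measurable_const.min measurable_id)

lemma key_trunc {τ x e s : ℝ} (hτ : 0 < τ) (he : 0 ≤ e) (hs : 0 ≤ s) :
    τ ^ s * |x - trunc τ x| ≤ |x| ^ (s + 1 + e) / τ ^ e := by
  have hτe : (0:ℝ) < τ ^ e := Real.rpow_pos_of_pos hτ e
  rcases le_or_gt |x| τ with h | h
  · rw [trunc_of_abs_le hτ.le h, sub_self, abs_zero, mul_zero]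
    positivity
  · rw [le_div_iff₀ hτe]
    have hx : (0:ℝ) < |x| := lt_trans hτ h
    have h1 : τ ^ s * |x - trunc τ x| * τ ^ e ≤ τ ^ (s + e) * |x| := by
      rw [Real.rpow_add hτ]
      have h2 := sub_trunc_abs_le hτ.le x
      calc τ ^ s * |x - trunc τ x| * τ ^ e = (τ ^ s * τ ^ e) * |x - trunc τ x| := by ring
        _ ≤ (τ ^ s * τ ^ e) * |x| := by
            apply mul_le_mul_of_nonneg_left h2 (by positivity)
        _ = τ ^ s * τ ^ e * |x| := rfl
    refine h1.trans ?_
    have h2 : τ ^ (s + e) ≤ |x| ^ (s + e) := Real.rpow_le_rpow hτ.le h.le (by linarith)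
    have h3 : |x| ^ (s + e) * |x| = |x| ^ (s + 1 + e) := by
      rw [← Real.rpow_add_one (ne_of_gt hx)]; ring_nf
    calc τ ^ (s + e) * |x| ≤ |x| ^ (s + e) * |x| := by nlinarith
      _ = |x| ^ (s + 1 + e) := h3

lemma pointwise_bound {ε τ : ℝ} (hε : 0 < ε) (hτ : 0 < τ) (x1 x2 x3 x4 : ℝ) :
    |trunc τ x1 * trunc τ x2 * (x3 * x4 - trunc τ x3 * trunc τ x4)|
      ≤ ((3 + 4*ε)/(4 + 4*ε) * |x3| ^ (4 + 4*ε)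
          + (1/(4 + 4*ε) + 1) * |x4| ^ (4 + 4*ε)) / τ ^ (4*ε) := by
  have hτe : (0:ℝ) < τ ^ (4*ε) := Real.rpow_pos_of_pos hτ _
  have hp : (0:ℝ) < 4 + 4*ε := by linarith
  set a := |x3|
  set b := |x4|
  have ha : 0 ≤ a := abs_nonneg _
  have hb : 0 ≤ b := abs_nonneg _
  -- step A
  have hA : |trunc τ x1 * trunc τ x2 * (x3 * x4 - trunc τ x3 * trunc τ x4)|
      ≤ τ ^ (2:ℝ) * (|x3 - trunc τ x3| * b) + τ ^ (3:ℝ) * |x4 - trunc τ x4| := by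
    have e2 : τ ^ (2:ℝ) = τ * τ := by
      rw [show (2:ℝ) = ((2:ℕ):ℝ) by norm_num, Real.rpow_natCast]; ring
    have e3 : τ ^ (3:ℝ) = τ * τ * τ := by
      rw [show (3:ℝ) = ((3:ℕ):ℝ) by norm_num, Real.rpow_natCast]; ring
    rw [e2, e3]
    have h1 : |trunc τ x1| ≤ τ := trunc_abs_le_tau hτ.le x1
    have h2 : |trunc τ x2| ≤ τ := trunc_abs_le_tau hτ.le x2
    have h3 : |trunc τ x3| ≤ τ := trunc_abs_le_tau hτ.le x3
    have hsplit : |x3 * x4 - trunc τ x3 * trunc τ x4|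
        ≤ |x3 - trunc τ x3| * b + τ * |x4 - trunc τ x4| := by
      have : x3 * x4 - trunc τ x3 * trunc τ x4
          = (x3 - trunc τ x3) * x4 + trunc τ x3 * (x4 - trunc τ x4) := by ring
      rw [this]
      refine (abs_add_le _ _).trans ?_
      rw [abs_mul, abs_mul]
      have := abs_nonneg (x4 - trunc τ x4)
      have := abs_nonneg (x3 - trunc τ x3)
      have := abs_nonneg (trunc τ x3)
      nlinarith
    rw [abs_mul, abs_mul]
    have hn2 := abs_nonneg (trunc τ x2)
    have hn3 := abs_nonneg (x3 * x4 - trunc τ x3 * trunc τ x4)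
    calc |trunc τ x1| * |trunc τ x2| * |x3 * x4 - trunc τ x3 * trunc τ x4|
        ≤ (τ * τ) * (|x3 - trunc τ x3| * b + τ * |x4 - trunc τ x4|) :=
          mul_le_mul (mul_le_mul h1 h2 hn2 hτ.le) hsplit hn3 (by positivity)
      _ = τ * τ * (|x3 - trunc τ x3| * b) + τ * τ * τ * |x4 - trunc τ x4| := by ring
  -- step B
  have hB : τ ^ (2:ℝ) * (|x3 - trunc τ x3| * b) ≤ a ^ (3 + 4*ε) * b / τ ^ (4*ε) := by
    have := key_trunc (x := x3) (e := 4*ε) (s := 2) hτ (by linarith) (by norm_num)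
    have hee : (2:ℝ) + 1 + 4*ε = 3 + 4*ε := by ring
    rw [hee] at this
    calc τ ^ (2:ℝ) * (|x3 - trunc τ x3| * b) = (τ ^ (2:ℝ) * |x3 - trunc τ x3|) * b := by ring
      _ ≤ (a ^ (3 + 4*ε) / τ ^ (4*ε)) * b := by
          apply mul_le_mul_of_nonneg_right this hb
      _ = a ^ (3 + 4*ε) * b / τ ^ (4*ε) := by ring
  -- step D
  have hD : τ ^ (3:ℝ) * |x4 - trunc τ x4| ≤ b ^ (4 + 4*ε) / τ ^ (4*ε) := by
    have := key_trunc (x := x4) (e := 4*ε) (s := 3) hτ (by linarith) (by norm_num)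
    have hee : (3:ℝ) + 1 + 4*ε = 4 + 4*ε := by ring
    rwa [hee] at this
  -- Young
  have hY : a ^ (3 + 4*ε) * b
      ≤ (3 + 4*ε)/(4 + 4*ε) * a ^ (4 + 4*ε) + 1/(4 + 4*ε) * b ^ (4 + 4*ε) := by
    have hw1 : (0:ℝ) ≤ (3 + 4*ε)/(4 + 4*ε) := by positivity
    have hw2 : (0:ℝ) ≤ 1/(4 + 4*ε) := by positivity
    have hsum : (3 + 4*ε)/(4 + 4*ε) + 1/(4 + 4*ε) = 1 := by
      field_simp
      ring
    have := Real.geom_mean_le_arith_mean2_weighted hw1 hw2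
      (Real.rpow_nonneg ha (4 + 4*ε)) (Real.rpow_nonneg hb (4 + 4*ε)) hsum
    have e1 : (a ^ (4 + 4*ε)) ^ ((3 + 4*ε)/(4 + 4*ε)) = a ^ (3 + 4*ε) := by
      rw [← Real.rpow_mul ha]
      congr 1
      field_simp
    have e2 : (b ^ (4 + 4*ε)) ^ (1/(4 + 4*ε)) = b := by
      rw [← Real.rpow_mul hb]
      rw [show (4 + 4*ε) * (1/(4 + 4*ε)) = 1 by field_simp, Real.rpow_one]
    rwa [e1, e2] at this
  calc |trunc τ x1 * trunc τ x2 * (x3 * x4 - trunc τ x3 * trunc τ x4)|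
      ≤ τ ^ (2:ℝ) * (|x3 - trunc τ x3| * b) + τ ^ (3:ℝ) * |x4 - trunc τ x4| := hA
    _ ≤ a ^ (3 + 4*ε) * b / τ ^ (4*ε) + b ^ (4 + 4*ε) / τ ^ (4*ε) := add_le_add hB hD
    _ ≤ ((3 + 4*ε)/(4 + 4*ε) * a ^ (4 + 4*ε) + 1/(4 + 4*ε) * b ^ (4 + 4*ε)) / τ ^ (4*ε)
          + b ^ (4 + 4*ε) / τ ^ (4*ε) := by
        gcongr
    _ = ((3 + 4*ε)/(4 + 4*ε) * a ^ (4 + 4*ε) + (1/(4 + 4*ε) + 1) * b ^ (4 + 4*ε)) / τ ^ (4*ε) := by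
        ring

/-- Mixed truncation bias: if `E|rᵢ|^{4+4ε} ≤ M₄` for each `i` and `τ > 0`, then
`|E[ψ_τ(r₁)ψ_τ(r₂)(r₃r₄ − ψ_τ(r₃)ψ_τ(r₄))]| ≤ 2 M₄ / τ^{4ε}`. -/
theorem mixed_truncation_bias {Ω : Type*} [MeasurableSpace Ω]
    (P : Measure Ω) [IsProbabilityMeasure P]
    (ε M₄ : ℝ) (hε : 0 < ε) (hε1 : ε ≤ 1) (hM : 0 < M₄)
    (r : Fin 4 → Ω → ℝ) (hmeas : ∀ i, Measurable (r i))
    (hint : ∀ i, Integrable (fun ω => |r i ω| ^ (4 + 4 * ε)) P)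
    (hmom : ∀ i, ∫ ω, |r i ω| ^ (4 + 4 * ε) ∂P ≤ M₄)
    (τ : ℝ) (hτ : 0 < τ) :
    |∫ ω, trunc τ (r 0 ω) * trunc τ (r 1 ω)
        * (r 2 ω * r 3 ω - trunc τ (r 2 ω) * trunc τ (r 3 ω)) ∂P|
      ≤ 2 * M₄ / τ ^ (4 * ε) := by
  have hp : (0:ℝ) < 4 + 4 * ε := by linarith
  have hτe : (0:ℝ) < τ ^ (4 * ε) := Real.rpow_pos_of_pos hτ _
  set w1 : ℝ := (3 + 4*ε)/(4 + 4*ε) with hw1def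
  set w2 : ℝ := 1/(4 + 4*ε) with hw2def
  have hw1 : 0 ≤ w1 := by positivity
  have hw2 : 0 ≤ w2 + 1 := by positivity
  set f : Ω → ℝ := fun ω => trunc τ (r 0 ω) * trunc τ (r 1 ω)
      * (r 2 ω * r 3 ω - trunc τ (r 2 ω) * trunc τ (r 3 ω)) with hfdef
  set g : Ω → ℝ := fun ω =>
      (w1 * |r 2 ω| ^ (4 + 4*ε) + (w2 + 1) * |r 3 ω| ^ (4 + 4*ε)) / τ ^ (4*ε) with hgdef
  have hint2 : Integrable (fun ω => w1 * |r 2 ω| ^ (4 + 4*ε)) P := (hint 2).const_mul w1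
  have hint3 : Integrable (fun ω => (w2 + 1) * |r 3 ω| ^ (4 + 4*ε)) P := (hint 3).const_mul _
  have hg_int : Integrable g P := ((hint2.add hint3).div_const _)
  have hg_nonneg : ∀ ω, 0 ≤ g ω := by
    intro ω
    have := Real.rpow_nonneg (abs_nonneg (r 2 ω)) (4 + 4*ε)
    have := Real.rpow_nonneg (abs_nonneg (r 3 ω)) (4 + 4*ε)
    positivity
  have hbound : ∀ ω, |f ω| ≤ g ω := fun ω =>
    pointwise_bound hε hτ (r 0 ω) (r 1 ω) (r 2 ω) (r 3 ω)
  have hf_meas : Measurable f := by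
    have m : ∀ i : Fin 4, Measurable fun ω => trunc τ (r i ω) :=
      fun i => (trunc_measurable hτ.le).comp (hmeas i)
    exact ((m 0).mul (m 1)).mul (((hmeas 2).mul (hmeas 3)).sub ((m 2).mul (m 3)))
  have hf_int : Integrable f P := by
    refine hg_int.mono hf_meas.aestronglyMeasurable (ae_of_all _ fun ω => ?_)
    rw [Real.norm_eq_abs, Real.norm_eq_abs, abs_of_nonneg (hg_nonneg ω)]
    exact hbound ω
  calc |∫ ω, f ω ∂P| ≤ ∫ ω, |f ω| ∂P := by
        simpa [Real.norm_eq_abs] using norm_integral_le_integral_norm (μ := P) f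
    _ ≤ ∫ ω, g ω ∂P := integral_mono hf_int.abs hg_int hbound
    _ = (w1 * ∫ ω, |r 2 ω| ^ (4 + 4*ε) ∂P
          + (w2 + 1) * ∫ ω, |r 3 ω| ^ (4 + 4*ε) ∂P) / τ ^ (4*ε) := by
        rw [hgdef]
        simp only [integral_div, integral_add hint2 hint3, integral_const_mul]
    _ ≤ (w1 * M₄ + (w2 + 1) * M₄) / τ ^ (4*ε) := by
        gcongr
        · exact hmom 2
        · exact hmom 3
    _ = 2 * M₄ / τ ^ (4*ε) := by
        have : w1 * M₄ + (w2 + 1) * M₄ = (w1 + w2 + 1) * M₄ := by ring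
        rw [this, show w1 + w2 + 1 = 2 by rw [hw1def, hw2def]; field_simp; ring]
end
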